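/- For 1 < p ≤ 2 there exists a constant c > 0 such that for all a, b in ℝⁿ, ⟪‖a‖^(p-2)a − ‖b‖^(p-2)b, a − b⟫ ≥ c · ‖a − b‖² · (‖a‖ + ‖b‖)^(p-2), where the right-hand side is interpreted as 0 when a = b = 0. -/

import Mathlib

open Real Classical

/-!
Write `A = ‖a‖`, `B = ‖b‖`, `t = ⟪a, b⟫`. Both sides of the inequality are affine in `t`, and
Cauchy–Schwarz confines `t` to `[-AB, AB]`, so it suffices to check the endpoints, i.e. the
collinear configurations. At `t = AB` the claim becomes the one-variable estimate
`(A^(p-1) - B^(p-1))(A - B) ≥ (p-1)(A+B)^(p-2)(A-B)^2`, which follows from the concavity of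
`x ↦ x^(p-1)` together with `(A+B)^(p-2) ≤ max(A,B)^(p-2)`; at `t = -AB` it becomes
`A^(p-1) + B^(p-1) ≥ (p-1)(A+B)^(p-1)`, the subadditivity of `x ↦ x^(p-1)`. This gives `c = p - 1`.
-/

lemma rpow_le_tangent_line {q A B : ℝ} (hq₀ : 0 ≤ q) (hq₁ : q ≤ 1) (hA : 0 < A) (hB : 0 ≤ B) :
    B ^ q ≤ A ^ q + q * A ^ (q - 1) * (B - A) := by
  have hbernoulli : (B / A) ^ q ≤ 1 + q * (B / A - 1) := by
    simpa using rpow_one_add_le_one_add_mul_self (s := B / A - 1)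
      (by linarith [div_nonneg hB hA.le]) hq₀ hq₁
  calc B ^ q = A ^ q * (B / A) ^ q := by
        rw [← mul_rpow hA.le (by positivity), mul_div_cancel₀ _ hA.ne']
    _ ≤ A ^ q * (1 + q * (B / A - 1)) := by gcongr
    _ = A ^ q + q * A ^ (q - 1) * (B - A) := by rw [rpow_sub_one hA.ne']; field_simp

lemma mul_rpow_mul_sub_le_rpow_sub_rpow {p A B : ℝ} (hp1 : 1 ≤ p) (hp2 : p ≤ 2) (hB : 0 ≤ B)
    (hBA : B ≤ A) : (p - 1) * (A + B) ^ (p - 2) * (A - B) ≤ A ^ (p - 1) - B ^ (p - 1) := by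
  obtain rfl | hBA := hBA.eq_or_lt
  · simp
  have hA : 0 < A := hB.trans_lt hBA
  have htangent := rpow_le_tangent_line (q := p - 1) (by linarith) (by linarith) hA hB
  rw [show p - 1 - 1 = p - 2 by ring] at htangent
  have hmono : (A + B) ^ (p - 2) ≤ A ^ (p - 2) :=
    rpow_le_rpow_of_nonpos hA (by linarith) (by linarith)
  nlinarith [mul_le_mul_of_nonneg_right hmono
    (mul_nonneg (by linarith : (0 : ℝ) ≤ p - 1) (by linarith : (0 : ℝ) ≤ A - B))]

lemma mul_rpow_mul_sq_le_rpow_sub_rpow_mul {p A B : ℝ} (hp1 : 1 ≤ p) (hp2 : p ≤ 2)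
    (hA : 0 ≤ A) (hB : 0 ≤ B) :
    (p - 1) * (A + B) ^ (p - 2) * (A - B) ^ 2 ≤ (A ^ (p - 1) - B ^ (p - 1)) * (A - B) := by
  rcases le_total B A with hBA | hAB
  · have h := mul_rpow_mul_sub_le_rpow_sub_rpow hp1 hp2 hB hBA
    nlinarith [mul_le_mul_of_nonneg_right h (sub_nonneg.2 hBA)]
  · have h := mul_rpow_mul_sub_le_rpow_sub_rpow hp1 hp2 hA hAB
    rw [add_comm B A] at h
    nlinarith [mul_le_mul_of_nonneg_right h (sub_nonneg.2 hAB)]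

lemma mul_add_rpow_le_rpow_add_rpow {p A B : ℝ} (hp1 : 1 ≤ p) (hp2 : p ≤ 2)
    (hA : 0 ≤ A) (hB : 0 ≤ B) :
    (p - 1) * (A + B) ^ (p - 1) ≤ A ^ (p - 1) + B ^ (p - 1) := by
  have hsubadd := rpow_add_le_add_rpow hA hB (p := p - 1) (by linarith) (by linarith)
  nlinarith [rpow_nonneg (add_nonneg hA hB) (p - 1)]

lemma nonneg_add_mul_of_abs_le {α β t M : ℝ} (h₁ : 0 ≤ α + β * M) (h₂ : 0 ≤ α - β * M)
    (ht : |t| ≤ M) : 0 ≤ α + β * t := by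
  obtain ⟨ht₁, ht₂⟩ := abs_le.mp ht
  rcases le_total 0 β with hβ | hβ <;> nlinarith

lemma mul_rpow_le_of_abs_le_mul {p A B t : ℝ} (hp1 : 1 < p) (hp2 : p ≤ 2)
    (hA : 0 ≤ A) (hB : 0 ≤ B) (ht : |t| ≤ A * B) :
    (p - 1) * (A ^ 2 - 2 * t + B ^ 2) * (A + B) ^ (p - 2) ≤
      A ^ (p - 2) * A ^ 2 + B ^ (p - 2) * B ^ 2 - (A ^ (p - 2) + B ^ (p - 2)) * t := by
  have hpow {x : ℝ} (hx : 0 ≤ x) : x ^ (p - 2) * x = x ^ (p - 1) := by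
    rw [← rpow_add_one' hx (by linarith)]; ring_nf
  have hA' := hpow hA
  have hB' := hpow hB
  have hAB' := hpow (add_nonneg hA hB)
  have hdiff := mul_rpow_mul_sq_le_rpow_sub_rpow_mul hp1.le hp2 hA hB
  have hsum := mul_add_rpow_le_rpow_add_rpow hp1.le hp2 hA hB
  have haffine := nonneg_add_mul_of_abs_le
    (α := A ^ (p - 2) * A ^ 2 + B ^ (p - 2) * B ^ 2 - (p - 1) * (A ^ 2 + B ^ 2) * (A + B) ^ (p - 2))
    (β := 2 * (p - 1) * (A + B) ^ (p - 2) - (A ^ (p - 2) + B ^ (p - 2))) ?endpoint_pos ?endpoint_neg ht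
  case endpoint_pos => linear_combination hdiff - (A - B) * hA' + (A - B) * hB'
  case endpoint_neg =>
    linear_combination (A + B) * hsum - (A + B) * hA' - (A + B) * hB' + (p - 1) * (A + B) * hAB'
  linarith

theorem mul_norm_sub_sq_mul_rpow_le_inner {E : Type*} [NormedAddCommGroup E]
    [InnerProductSpace ℝ E] {p : ℝ} (hp1 : 1 < p) (hp2 : p ≤ 2) (a b : E) :
    (p - 1) * ‖a - b‖ ^ 2 * (‖a‖ + ‖b‖) ^ (p - 2) ≤
      inner ℝ (‖a‖ ^ (p - 2) • a - ‖b‖ ^ (p - 2) • b) (a - b) := by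
  have hinner : inner ℝ (‖a‖ ^ (p - 2) • a - ‖b‖ ^ (p - 2) • b) (a - b)
      = ‖a‖ ^ (p - 2) * ‖a‖ ^ 2 + ‖b‖ ^ (p - 2) * ‖b‖ ^ 2
        - (‖a‖ ^ (p - 2) + ‖b‖ ^ (p - 2)) * inner ℝ a b := by
    simp only [inner_sub_left, inner_sub_right, real_inner_smul_left, real_inner_self_eq_norm_sq,
      real_inner_comm a b]
    ring
  rw [hinner, norm_sub_sq_real]
  exact mul_rpow_le_of_abs_le_mul hp1 hp2 (norm_nonneg a) (norm_nonneg b)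
    (abs_real_inner_le_norm a b)

theorem stmt_2 (n : ℕ) (p : ℝ) (hp1 : 1 < p) (hp2 : p ≤ 2)
    (F : EuclideanSpace ℝ (Fin n) → EuclideanSpace ℝ (Fin n))
    (hF : ∀ a, F a = if a = 0 then 0 else ‖a‖ ^ (p - 2) • a) :
    ∃ c : ℝ, 0 < c ∧ ∀ a b : EuclideanSpace ℝ (Fin n),
      (inner ℝ (F a - F b) (a - b) : ℝ) ≥
        (if a = 0 ∧ b = 0 then 0
         else c * ‖a - b‖ ^ 2 * (‖a‖ + ‖b‖) ^ (p - 2)) := by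
  have hF' : ∀ a, F a = ‖a‖ ^ (p - 2) • a := fun a => by
    rw [hF]; split_ifs with ha <;> simp [ha]
  refine ⟨p - 1, by linarith, fun a b => ?_⟩
  have hmono := mul_norm_sub_sq_mul_rpow_le_inner hp1 hp2 a b
  rw [hF', hF', ge_iff_le]
  split_ifs
  · exact le_trans (mul_nonneg (mul_nonneg (by linarith) (sq_nonneg _)) (by positivity)) hmono
  · exact hmono
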